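/- arXiv:2503.11795 — 5 statements merged into one kernel-verified Lean document; each statement's English description precedes it below -/
import Mathlib

section
/- Let A_CL be a (n+n_K)×(n+n_K) real matrix, B_CL a (n+n_K)×(2n) real matrix, C_CL an m×(n+n_K) real matrix and D_CL an m×(2n) real matrix. Let Ω_O ⊆ ℝ^{n+n_K}, 𝒵 ⊆ ℝ^{2n}, S_c ⊆ ℝⁿ, 𝒳 ⊆ ℝⁿ, 𝒰 ⊆ ℝᵐ be sets satisfying: (O1) S_c × {0} ⊆ Ω_O (zero padding in the last n_K coordinates); (O2) (A_CL '' Ω_O) ⊕ (B_CL '' 𝒵) ⊆ Ω_O; (O3) the projection of Ω_O onto its first n coordinates is contained in 𝒳; (O4) (C_CL '' Ω_O) ⊕ (D_CL '' 𝒵) ⊆ 𝒰. Then for every x₀ ∈ S_c and every sequence z : ℕ → ℝ^{2n} with z[k] ∈ 𝒵 for all k, the trajectory ξ[0] = (x₀, 0), ξ[k+1] = A_CL ξ[k] + B_CL z[k] satisfies: the first n coordinates of ξ[k] lie in 𝒳 and u[k] := C_CL ξ[k] + D_CL z[k] lies in 𝒰, for all k ∈ ℕ. -/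
open Pointwise

/-- Constraint satisfaction in closed loop (Theorem 1, point a), closed-loop phase):
under conditions O1)-O4), trajectories initialized at `(x₀, 0)` with `x₀ ∈ S_c`
keep their first `n` coordinates in `𝒳` and the command `u[k]` in `𝒰`. -/
theorem closed_loop_constraint_satisfaction
    (n nK m : ℕ)
    (ACL : Matrix (Fin (n + nK)) (Fin (n + nK)) ℝ)
    (BCL : Matrix (Fin (n + nK)) (Fin (2 * n)) ℝ)
    (CCL : Matrix (Fin m) (Fin (n + nK)) ℝ)
    (DCL : Matrix (Fin m) (Fin (2 * n)) ℝ)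
    (ΩO : Set (Fin (n + nK) → ℝ)) (Z : Set (Fin (2 * n) → ℝ))
    (Sc : Set (Fin n → ℝ)) (X : Set (Fin n → ℝ)) (U : Set (Fin m → ℝ))
    (hO1 : ∀ x ∈ Sc, Fin.append x (0 : Fin nK → ℝ) ∈ ΩO)
    (hO2 : (ACL.mulVec '' ΩO) + (BCL.mulVec '' Z) ⊆ ΩO)
    (hO3 : (fun ξ : Fin (n + nK) → ℝ => fun i : Fin n => ξ (Fin.castAdd nK i)) '' ΩO ⊆ X)
    (hO4 : (CCL.mulVec '' ΩO) + (DCL.mulVec '' Z) ⊆ U)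
    (x₀ : Fin n → ℝ) (hx₀ : x₀ ∈ Sc)
    (z : ℕ → Fin (2 * n) → ℝ) (hz : ∀ k, z k ∈ Z)
    (ξ : ℕ → Fin (n + nK) → ℝ)
    (hξ0 : ξ 0 = Fin.append x₀ (0 : Fin nK → ℝ))
    (hξ : ∀ k, ξ (k + 1) = ACL.mulVec (ξ k) + BCL.mulVec (z k)) :
    ∀ k, (fun i : Fin n => ξ k (Fin.castAdd nK i)) ∈ X ∧
      CCL.mulVec (ξ k) + DCL.mulVec (z k) ∈ U := by
  have hΩ : ∀ k, ξ k ∈ ΩO := by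
    intro k
    induction k with
    | zero => rw [hξ0]; exact hO1 x₀ hx₀
    | succ k ih =>
      rw [hξ k]
      exact hO2 (Set.add_mem_add (Set.mem_image_of_mem _ ih)
        (Set.mem_image_of_mem _ (hz k)))
  intro k
  exact ⟨hO3 (Set.mem_image_of_mem _ (hΩ k)),
    hO4 (Set.add_mem_add (Set.mem_image_of_mem _ (hΩ k))
      (Set.mem_image_of_mem _ (hz k)))⟩
end

section
/- Let Ω ⊆ ℝ^d with 0 ∈ Ω and ηΩ ⊆ Ω for a given η ∈ (0,1), let A be a d×d real matrix, and let 𝒵₀ ⊆ ℝ^d with 0 ∈ 𝒵₀, such that (A.mulVec '' Ω) ⊕ 𝒵₀ ⊆ ηΩ. Define recursively Z̃₀ := 𝒵₀ and Z̃_{N+1} := (A.mulVec '' Z̃_N) ⊕ 𝒵₀. Then Z̃_N ⊆ ηΩ for every N ∈ ℕ; equivalently, for every N ∈ ℕ, every vector of the form Σ_{i=0}^N A^i z_i with each z_i ∈ 𝒵₀ belongs to ηΩ. -/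
open Pointwise

/-- Accumulated-disturbance containment (Theorem 2, point a), condition I3 from C1):
if `(A '' Ω) ⊕ 𝒵₀ ⊆ η Ω` with `0 ∈ Ω`, `η Ω ⊆ Ω`, `0 ∈ 𝒵₀`, then the recursively
defined sets `Z̃₀ = 𝒵₀`, `Z̃_{N+1} = (A '' Z̃_N) ⊕ 𝒵₀` all satisfy `Z̃_N ⊆ η Ω`;
equivalently, every `Σ_{i=0}^N A^i z_i` with `z_i ∈ 𝒵₀` belongs to `η Ω`. -/
theorem accumulated_disturbance_containment
    (d : ℕ) (A : Matrix (Fin d) (Fin d) ℝ)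
    (Ω Z0 : Set (Fin d → ℝ)) (η : ℝ) (hη : η ∈ Set.Ioo (0 : ℝ) 1)
    (h0Ω : (0 : Fin d → ℝ) ∈ Ω) (hηΩ : η • Ω ⊆ Ω)
    (h0Z : (0 : Fin d → ℝ) ∈ Z0)
    (hC1 : (A.mulVec '' Ω) + Z0 ⊆ η • Ω)
    (Zt : ℕ → Set (Fin d → ℝ))
    (hZt0 : Zt 0 = Z0)
    (hZts : ∀ N, Zt (N + 1) = (A.mulVec '' Zt N) + Z0) :
    (∀ N, Zt N ⊆ η • Ω) ∧
      ∀ (N : ℕ) (z : ℕ → Fin d → ℝ), (∀ i, z i ∈ Z0) →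
        (∑ i ∈ Finset.range (N + 1), (A ^ i).mulVec (z i)) ∈ η • Ω := by
  have hZ0 : Z0 ⊆ η • Ω := by
    intro x hx
    apply hC1
    refine ⟨A.mulVec 0, ⟨0, h0Ω, rfl⟩, x, hx, ?_⟩
    simp [Matrix.mulVec_zero]
  have hmain : ∀ N, Zt N ⊆ η • Ω := by
    intro N
    induction N with
    | zero => rw [hZt0]; exact hZ0
    | succ n ih =>
      rw [hZts]
      intro x hx
      obtain ⟨a, ⟨w, hw, rfl⟩, b, hb, rfl⟩ := hx
      exact hC1 ⟨A.mulVec w, ⟨w, hηΩ (ih hw), rfl⟩, b, hb, rfl⟩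
  refine ⟨hmain, fun N => ?_⟩
  have key : ∀ N (z : ℕ → Fin d → ℝ), (∀ i, z i ∈ Z0) →
      (∑ i ∈ Finset.range (N + 1), (A ^ i).mulVec (z i)) ∈ Zt N := by
    intro N
    induction N with
    | zero => intro z hz; simpa [hZt0, Matrix.one_mulVec] using hz 0
    | succ n ih =>
      intro z hz
      rw [hZts]
      have hsum : (∑ i ∈ Finset.range (n + 2), (A ^ i).mulVec (z i))
          = A.mulVec (∑ i ∈ Finset.range (n + 1), (A ^ i).mulVec (z (i + 1))) + z 0 := by
        rw [Finset.sum_range_succ' (fun i => (A ^ i).mulVec (z i)) (n + 1)]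
        simp only [← Matrix.mulVecLin_apply, map_sum]
        congr 1
        · refine Finset.sum_congr rfl fun i _ => ?_
          simp [Matrix.mulVecLin_apply, pow_succ', ← Matrix.mulVec_mulVec]
        · simp [Matrix.one_mulVec]
      rw [hsum]
      exact ⟨_, ⟨_, ih (fun i => z (i + 1)) (fun i => hz (i + 1)), rfl⟩, z 0, hz 0, rfl⟩
  exact fun z hz => hmain N (key N z hz)
end

section
/- Let A be a d×d real matrix such that the operator 2-norm ‖A^j‖ tends to 0 as j → ∞, let B be a d×p real matrix, 𝒵 ⊆ ℝ^p, and let P : ℝ^d → ℝⁿ be the projection onto the first n coordinates. Let C ⊆ ℝⁿ be a convex set such that: (i) there exists α > 0 with the closed Euclidean ball of radius α centered at 0 contained in C; and (ii) there exists β ∈ (0,1) such that for every N ∈ ℕ and every choice z₀, …, z_N ∈ 𝒵, the vector Σ_{i=0}^N P(A^i B z_i) belongs to β • C := {β • c : c ∈ C}. Let S ⊆ ℝⁿ be a bounded set and let ι : ℝⁿ → ℝ^d pad a vector with n_K = d − n trailing zeros. Then there exists T_max ∈ ℕ, T_max ≥ 1, such that for every x₀ ∈ S, every sequence z : ℕ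 → ℝ^p with z[i] ∈ 𝒵 for all i, and every j ≥ T_max, the vector P(A^j ι(x₀) + Σ_{i=0}^{j-1} A^{j-1-i} B z[i]) belongs to C. -/
/-!
The state at time `j` is the free response `Aʲ ι(x₀)` plus the accumulated disturbance
`∑ Aʲ⁻¹⁻ⁱ B zᵢ`. Reversing the order of the inputs turns the latter into an instance of the
accumulation hypothesis, so its projection lies in `β • C`. Since `‖Aʲ‖ → 0` and `S` is bounded,
the projected free response eventually lies in `(1 - β) • B̄_α ⊆ (1 - β) • C`, uniformly in `x₀`,
and convexity gives `(1 - β) • C + β • C = C`.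
-/

open Pointwise Filter Metric Finset WithLp Matrix

namespace EuclideanSpace

variable {𝕜 : Type*} [RCLike 𝕜]

theorem norm_toLp_comp_le {ι κ : Type*} [Fintype ι] [Fintype κ] (f : ι ↪ κ)
    (v : EuclideanSpace 𝕜 κ) : ‖(toLp 2 fun i => v (f i) : EuclideanSpace 𝕜 ι)‖ ≤ ‖v‖ := by
  rw [norm_eq, norm_eq]
  gcongr
  calc ∑ i, ‖v (f i)‖ ^ 2 = ∑ k ∈ univ.map f, ‖v k‖ ^ 2 :=
        (sum_map univ f fun k => ‖v k‖ ^ 2).symm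
    _ ≤ ∑ k, ‖v k‖ ^ 2 := sum_le_univ_sum_of_nonneg fun _ => by positivity

theorem norm_toLp_append_zero {n m : ℕ} (x : EuclideanSpace 𝕜 (Fin n)) :
    ‖(toLp 2 (Fin.append x (0 : Fin m → 𝕜)) : EuclideanSpace 𝕜 (Fin (n + m)))‖ = ‖x‖ := by
  simp [norm_eq, Fin.sum_univ_add]

end EuclideanSpace

theorem Convex.add_mem_of_norm_le_of_mem_smul {E : Type*} [SeminormedAddCommGroup E]
    [NormedSpace ℝ E] {C : Set E} (hC : Convex ℝ C) {r β : ℝ} (hball : closedBall 0 r ⊆ C)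
    (hβ₀ : 0 ≤ β) (hβ₁ : β < 1) {e y : E} (he : ‖e‖ ≤ (1 - β) * r) (hy : y ∈ β • C) :
    e + y ∈ C := by
  have hβ₁' : 1 - β ≠ 0 := by linarith
  have he' : e ∈ (1 - β) • C := by
    refine Set.smul_set_mono hball ?_
    rwa [smul_closedBall' hβ₁', smul_zero, mem_closedBall_zero_iff, Real.norm_of_nonneg (by linarith)]
  have hsplit : (1 - β) • C + β • C = C := by
    rw [← hC.add_smul (by linarith) hβ₀, sub_add_cancel, one_smul]
  exact hsplit ▸ Set.add_mem_add he' hy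

theorem Finset.sum_range_succ_sub_swap {M : Type*} [AddCommMonoid M] (f : ℕ → ℕ → M) (N : ℕ) :
    ∑ k ∈ range (N + 1), f (N - k) k = ∑ k ∈ range (N + 1), f k (N - k) := by
  rw [← Nat.sum_antidiagonal_eq_sum_range_succ f,
    ← Nat.sum_antidiagonal_eq_sum_range_succ fun i j => f j i, ← Nat.sum_antidiagonal_swap]
  rfl

theorem norm_toLp_castAdd_mulVec_append_zero_le {𝕜 : Type*} [RCLike 𝕜] {n m : ℕ}
    (M : Matrix (Fin (n + m)) (Fin (n + m)) 𝕜) (x : EuclideanSpace 𝕜 (Fin n)) :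
    ‖(toLp 2 fun i : Fin n => (M *ᵥ Fin.append x (0 : Fin m → 𝕜)) (Fin.castAdd m i) :
      EuclideanSpace 𝕜 (Fin n))‖ ≤ ‖toEuclideanCLM (𝕜 := 𝕜) M‖ * ‖x‖ :=
  calc _ ≤ ‖toEuclideanCLM (𝕜 := 𝕜) M (toLp 2 (Fin.append x 0))‖ :=
        EuclideanSpace.norm_toLp_comp_le (Fin.castAddEmb m) _
    _ ≤ ‖toEuclideanCLM (𝕜 := 𝕜) M‖ * ‖(toLp 2 (Fin.append x 0) :
          EuclideanSpace 𝕜 (Fin (n + m)))‖ := ContinuousLinearMap.le_opNorm _ _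
    _ = ‖toEuclideanCLM (𝕜 := 𝕜) M‖ * ‖x‖ := by
        rw [EuclideanSpace.norm_toLp_append_zero]

theorem toLp_castAdd_sum_pow_sub_mulVec_mem {R : Type*} [CommRing R] {n m p : ℕ}
    {A : Matrix (Fin (n + m)) (Fin (n + m)) R} {B : Matrix (Fin (n + m)) (Fin p) R}
    {Z : Set (Fin p → R)} {K : Set (WithLp 2 (Fin n → R))}
    (hacc : ∀ (N : ℕ) (z : ℕ → Fin p → R), (∀ i, z i ∈ Z) →
      toLp 2 (fun i : Fin n =>
        (∑ i' ∈ range (N + 1), A ^ i' *ᵥ B *ᵥ z i') (Fin.castAdd m i)) ∈ K)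
    {z : ℕ → Fin p → R} (hz : ∀ i, z i ∈ Z) {j : ℕ} (hj : 1 ≤ j) :
    toLp 2 (fun i : Fin n =>
      (∑ i' ∈ range j, A ^ (j - 1 - i') *ᵥ B *ᵥ z i') (Fin.castAdd m i)) ∈ K := by
  obtain ⟨N, rfl⟩ := Nat.exists_eq_add_of_le' hj
  rw [Nat.add_sub_cancel, sum_range_succ_sub_swap fun a b => A ^ a *ᵥ B *ᵥ z b]
  exact hacc N (fun k => z (N - k)) fun k => hz _

/-- Uniform finite-time convergence (Theorem 1, point b)): if `‖A^j‖ → 0`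
(Euclidean operator norm), `C` is convex, contains a ball `B̄_α`, and all
accumulated disturbances `Σ P(A^i B z_i)` lie in `β • C` with `β ∈ (0,1)`,
then there is a uniform `T_max ≥ 1` such that for every bounded initial set
`S`, every `x₀ ∈ S`, every admissible disturbance sequence, and every
`j ≥ T_max`, the projected state at time `j` belongs to `C`. -/
theorem uniform_finite_time_entry
    (n nK p : ℕ)
    (A : Matrix (Fin (n + nK)) (Fin (n + nK)) ℝ)
    (hA : Filter.Tendsto (fun j : ℕ => ‖Matrix.toEuclideanCLM (𝕜 := ℝ) (A ^ j)‖)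
      Filter.atTop (nhds 0))
    (B : Matrix (Fin (n + nK)) (Fin p) ℝ) (Z : Set (Fin p → ℝ))
    (C : Set (EuclideanSpace ℝ (Fin n))) (hC : Convex ℝ C)
    (α : ℝ) (hα : 0 < α)
    (hball : Metric.closedBall (0 : EuclideanSpace ℝ (Fin n)) α ⊆ C)
    (β : ℝ) (hβ : β ∈ Set.Ioo (0 : ℝ) 1)
    (hacc : ∀ (N : ℕ) (z : ℕ → Fin p → ℝ), (∀ i, z i ∈ Z) →
      WithLp.toLp 2 (fun i : Fin n =>
        (∑ i' ∈ Finset.range (N + 1), (A ^ i').mulVec (B.mulVec (z i'))) (Fin.castAdd nK i))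
        ∈ β • C)
    (S : Set (EuclideanSpace ℝ (Fin n))) (hS : Bornology.IsBounded S) :
    ∃ Tmax : ℕ, 1 ≤ Tmax ∧
      ∀ x₀ ∈ S, ∀ z : ℕ → Fin p → ℝ, (∀ i, z i ∈ Z) → ∀ j, Tmax ≤ j →
        WithLp.toLp 2 (fun i : Fin n =>
          ((A ^ j).mulVec (Fin.append x₀ (0 : Fin nK → ℝ)) +
            ∑ i' ∈ Finset.range j, (A ^ (j - 1 - i')).mulVec (B.mulVec (z i')))
            (Fin.castAdd nK i)) ∈ C := by
  obtain ⟨hβ₀, hβ₁⟩ := hβ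
  obtain ⟨M, hM⟩ := hS.exists_norm_le
  have hsmall : ∀ᶠ j : ℕ in atTop, ‖toEuclideanCLM (𝕜 := ℝ) (A ^ j)‖ * M < (1 - β) * α := by
    have hlim := hA.mul_const M
    rw [zero_mul] at hlim
    exact hlim.eventually_lt_const (mul_pos (sub_pos.2 hβ₁) hα)
  obtain ⟨T, hT⟩ := hsmall.exists_forall_of_atTop
  refine ⟨T + 1, le_add_self, fun x₀ hx₀ z hz j hj => ?_⟩
  have hfree := calc
    _ ≤ ‖toEuclideanCLM (𝕜 := ℝ) (A ^ j)‖ * ‖x₀‖ :=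
        norm_toLp_castAdd_mulVec_append_zero_le (A ^ j) x₀
    _ ≤ ‖toEuclideanCLM (𝕜 := ℝ) (A ^ j)‖ * M := by gcongr; exact hM x₀ hx₀
    _ ≤ (1 - β) * α := (hT j (by omega)).le
  exact hC.add_mem_of_norm_le_of_mem_smul hball hβ₀.le hβ₁ hfree
    (toLp_castAdd_sum_pow_sub_mulVec_mem hacc hz (by omega))
end

section
/- Let H be an invertible d×d real matrix and define the symmetric polytope Ω̃ := {ξ ∈ ℝ^d : |(H.mulVec ξ)_j| ≤ 1 for all j}. Let A be a d×d real matrix, B a d×p real matrix, 𝒵 ⊆ ℝ^p a set containing 0, and η ∈ (0,1), and assume the invariance condition (A.mulVec '' Ω̃) ⊕ (B.mulVec '' 𝒵) ⊆ η • Ω̃. Then the matrix A is Schur: every complex eigenvalue of A (i.e., every eigenvalue of the complexification of A) has modulus strictly less than 1. -/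
/-!
Conjugating by `H` turns `Ω̃` into the unit ball of the sup norm, so taking `z = 0` in the
invariance condition says that `M = H A H⁻¹` maps that ball into its `η`-multiple, i.e. the
`ℓ∞` operator norm (maximal absolute row sum) of `M` is at most `η`. This norm is unchanged by
complexification, and it bounds the modulus of every eigenvalue of `M`, which are those of `A`.
-/

open Pointwise Matrix

namespace Matrix

open scoped Matrix.Norms.Operator

variable {m n : Type*} [Fintype m] [Fintype n]

theorem linfty_opNorm_map_of_nnnorm_eq {α β : Type*} [SeminormedAddCommGroup α]
    [SeminormedAddCommGroup β] {f : α → β} (hf : ∀ a, ‖f a‖₊ = ‖a‖₊) (M : Matrix m n α) :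
    ‖M.map f‖ = ‖M‖ := by
  simp only [linfty_opNorm_def, map_apply, hf]

theorem norm_le_linfty_opNorm_of_mulVec_eq_smul {𝕜 : Type*} [NormedField 𝕜]
    {M : Matrix n n 𝕜} {v : n → 𝕜} {μ : 𝕜} (hv : v ≠ 0) (h : M *ᵥ v = μ • v) :
    ‖μ‖ ≤ ‖M‖ := by
  have hMv := linfty_opNorm_mulVec M v
  rw [h, norm_smul] at hMv
  exact le_of_mul_le_mul_right hMv (norm_pos_iff.2 hv)

theorem linfty_opNorm_le_of_norm_mulVec_le {𝕜 : Type*} [NontriviallyNormedField 𝕜]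
    [NormedAlgebra ℝ 𝕜] (M : Matrix m n 𝕜) {C : ℝ} (hC : 0 ≤ C)
    (h : ∀ u, ‖u‖ ≤ 1 → ‖M *ᵥ u‖ ≤ C) : ‖M‖ ≤ C := by
  rw [linfty_opNorm_eq_opNorm]
  exact ContinuousLinearMap.opNorm_le_of_unit_norm hC fun u hu => h u hu.le

theorem exists_mulVec_conj_eq_smul_of_map_mulVec_eq_smul {K L : Type*} [DecidableEq n]
    [Field K] [Field L] (f : K →+* L) {H A : Matrix n n K} (hH : IsUnit H.det)
    {v : n → L} {μ : L} (hv : v ≠ 0) (hAv : A.map f *ᵥ v = μ • v) :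
    ∃ w ≠ 0, (H * A * H⁻¹).map f *ᵥ w = μ • w := by
  have hconj : (H * A * H⁻¹).map f * H.map f = H.map f * A.map f := by
    rw [← Matrix.map_mul, ← Matrix.map_mul, Matrix.mul_assoc, nonsing_inv_mul _ hH, mul_one]
  have hdet : (H.map f).det ≠ 0 := by
    rw [← RingHom.mapMatrix_apply, ← f.map_det]
    exact (map_ne_zero f).2 hH.ne_zero
  refine ⟨H.map f *ᵥ v, ?_, ?_⟩
  · exact (mulVec_injective_of_det_ne_zero hdet).ne_iff' (mulVec_zero _) |>.2 hv
  · rw [mulVec_mulVec, hconj, ← mulVec_mulVec, hAv, mulVec_smul]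

def symmPolytope (H : Matrix m n ℝ) : Set (n → ℝ) :=
  {ξ | ∀ j, |(H *ᵥ ξ) j| ≤ 1}

theorem mem_symmPolytope_iff {H : Matrix m n ℝ} {ξ : n → ℝ} :
    ξ ∈ symmPolytope H ↔ ‖H *ᵥ ξ‖ ≤ 1 := by
  simp only [pi_norm_le_iff_of_nonneg zero_le_one, Real.norm_eq_abs]
  rfl

theorem linfty_opNorm_conj_le_of_mulVec_image_subset_smul [DecidableEq n] {H A : Matrix n n ℝ}
    (hH : IsUnit H.det) {η : ℝ} (hη : 0 ≤ η)
    (hA : A.mulVec '' symmPolytope H ⊆ η • symmPolytope H) : ‖H * A * H⁻¹‖ ≤ η := by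
  refine linfty_opNorm_le_of_norm_mulVec_le _ hη fun u hu => ?_
  have hξ : H⁻¹ *ᵥ u ∈ symmPolytope H := by
    rwa [mem_symmPolytope_iff, mulVec_mulVec, mul_nonsing_inv _ hH, one_mulVec]
  obtain ⟨ζ, hζ, hAζ⟩ := hA ⟨_, hξ, rfl⟩
  calc ‖(H * A * H⁻¹) *ᵥ u‖ = ‖η • H *ᵥ ζ‖ := by
        rw [← mulVec_mulVec, ← mulVec_mulVec, ← hAζ, mulVec_smul]
    _ = η * ‖H *ᵥ ζ‖ := by rw [norm_smul, Real.norm_of_nonneg hη]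
    _ ≤ η := mul_le_of_le_one_right hη (mem_symmPolytope_iff.1 hζ)

end Matrix

open scoped Matrix.Norms.Operator in
/-- Theorem 2, point b): if the symmetric polytope `Ω̃` with invertible shape
matrix `H` satisfies the contractive invariance condition
`(A '' Ω̃) ⊕ (B '' 𝒵) ⊆ η • Ω̃` with `η ∈ (0,1)` and `0 ∈ 𝒵`, then `A` is a
Schur matrix: every complex eigenvalue of (the complexification of) `A` has
modulus strictly less than 1. -/
theorem contractive_polytope_invariance_implies_schur
    (d p : ℕ) (H : Matrix (Fin d) (Fin d) ℝ) (hH : IsUnit H.det)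
    (A : Matrix (Fin d) (Fin d) ℝ) (B : Matrix (Fin d) (Fin p) ℝ)
    (Z : Set (Fin p → ℝ)) (h0Z : (0 : Fin p → ℝ) ∈ Z)
    (η : ℝ) (hη : η ∈ Set.Ioo (0 : ℝ) 1)
    (hinv : (A.mulVec '' {ξ : Fin d → ℝ | ∀ j, |H.mulVec ξ j| ≤ 1}) +
        (B.mulVec '' Z) ⊆ η • {ξ : Fin d → ℝ | ∀ j, |H.mulVec ξ j| ≤ 1}) :
    ∀ (μ : ℂ) (v : Fin d → ℂ), v ≠ 0 →
      (A.map (Complex.ofReal)).mulVec v = μ • v → ‖μ‖ < 1 := by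
  intro μ v hv hAv
  have hA : A.mulVec '' symmPolytope H ⊆ η • symmPolytope H :=
    (Set.subset_add_left _ (t := B.mulVec '' Z) ⟨0, h0Z, mulVec_zero B⟩).trans hinv
  obtain ⟨w, hw, hMw⟩ :=
    exists_mulVec_conj_eq_smul_of_map_mulVec_eq_smul Complex.ofRealHom hH hv hAv
  calc ‖μ‖ ≤ ‖(H * A * H⁻¹).map Complex.ofReal‖ := norm_le_linfty_opNorm_of_mulVec_eq_smul hw hMw
    _ = ‖H * A * H⁻¹‖ := linfty_opNorm_map_of_nnnorm_eq Complex.nnnorm_real _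
    _ ≤ η := linfty_opNorm_conj_le_of_mulVec_image_subset_smul hH hη.1.le hA
    _ < 1 := hη.2
end

section
/- Let H be an invertible (n+m)×(n+m) real matrix, and define Ω̃ := {ξ ∈ ℝ^{n+m} : |(H.mulVec ξ)_j| ≤ 1 for all j}. Then the closed Euclidean ball in ℝⁿ of radius 1/‖H‖ centered at 0 (where ‖H‖ is the operator 2-norm) is contained in the image of Ω̃ under the projection onto the first n coordinates. -/
/-! A point `x` of the ball lifts to `ξ = (x, 0)`, which has the same norm, and then
`|(Hξ)_j| ≤ ‖Hξ‖ ≤ ‖H‖ ‖ξ‖ ≤ 1` for every coordinate `j`. -/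

open WithLp

namespace EuclideanSpace

variable {𝕜 : Type*} [RCLike 𝕜] {n : ℕ} (m : ℕ)

def extendByZero (x : EuclideanSpace 𝕜 (Fin n)) : EuclideanSpace 𝕜 (Fin (n + m)) :=
  toLp 2 (Fin.append (ofLp x) 0)

@[simp]
lemma extendByZero_castAdd (x : EuclideanSpace 𝕜 (Fin n)) (i : Fin n) :
    extendByZero m x (Fin.castAdd m i) = x i :=
  Fin.append_left _ _ i

@[simp]
lemma norm_extendByZero (x : EuclideanSpace 𝕜 (Fin n)) : ‖extendByZero m x‖ = ‖x‖ := by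
  simp [EuclideanSpace.norm_eq, Fin.sum_univ_add, extendByZero]

end EuclideanSpace

lemma ContinuousLinearMap.abs_apply_le_one_of_norm_le_inv_opNorm {ι E : Type*} [Fintype ι]
    [NormedAddCommGroup E] [NormedSpace ℝ E] (A : E →L[ℝ] EuclideanSpace ℝ ι) {ξ : E}
    (hξ : ‖ξ‖ ≤ 1 / ‖A‖) (j : ι) : |A ξ j| ≤ 1 :=
  calc |A ξ j| ≤ ‖A ξ‖ := PiLp.norm_apply_le (A ξ) j
    _ ≤ ‖A‖ * ‖ξ‖ := A.le_opNorm ξ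
    _ ≤ ‖A‖ * (1 / ‖A‖) := by gcongr
    _ ≤ 1 := by rw [mul_one_div]; exact div_self_le_one _

theorem closedBall_subset_proj_symmetric_polytope_general
    (n m : ℕ) (H : Matrix (Fin (n + m)) (Fin (n + m)) ℝ) :
    Metric.closedBall (0 : EuclideanSpace ℝ (Fin n))
        (1 / ‖Matrix.toEuclideanCLM (𝕜 := ℝ) H‖) ⊆
      (fun ξ : EuclideanSpace ℝ (Fin (n + m)) =>
          (WithLp.toLp 2 (fun i : Fin n => ξ (Fin.castAdd m i)) : EuclideanSpace ℝ (Fin n))) ''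
        {ξ : EuclideanSpace ℝ (Fin (n + m)) | ∀ j, |H.mulVec ξ j| ≤ 1} := by
  intro x hx
  rw [mem_closedBall_zero_iff] at hx
  refine ⟨EuclideanSpace.extendByZero m x, fun j => ?_, by ext i; simp⟩
  exact (Matrix.toEuclideanCLM (𝕜 := ℝ) H).abs_apply_le_one_of_norm_le_inv_opNorm
    (by rwa [EuclideanSpace.norm_extendByZero]) j

/-- Condition I2) of Theorem 2, point a): for an invertible shape matrix `H`,
the closed Euclidean ball in `ℝⁿ` of radius `1/‖H‖` (operator 2-norm) is
contained in the projection onto the first `n` coordinates of the symmetric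
polytope `Ω̃ = {ξ ∈ ℝ^{n+m} : |(Hξ)_j| ≤ 1 ∀ j}`. -/
theorem closedBall_subset_proj_symmetric_polytope
    (n m : ℕ) (H : Matrix (Fin (n + m)) (Fin (n + m)) ℝ) (hH : IsUnit H.det) :
    Metric.closedBall (0 : EuclideanSpace ℝ (Fin n))
        (1 / ‖Matrix.toEuclideanCLM (𝕜 := ℝ) H‖) ⊆
      (fun ξ : EuclideanSpace ℝ (Fin (n + m)) =>
          (WithLp.toLp 2 (fun i : Fin n => ξ (Fin.castAdd m i)) : EuclideanSpace ℝ (Fin n))) ''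
        {ξ : EuclideanSpace ℝ (Fin (n + m)) | ∀ j, |H.mulVec ξ j| ≤ 1} :=
  closedBall_subset_proj_symmetric_polytope_general n m H
end
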